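/- arXiv:math/0304448 — 6 statements merged into one kernel-verified Lean document; each statement's English description precedes it below -/
import Mathlib

section
/- Let x_1, ..., x_d be complex numbers with |x_j| < 1 for all j. Then the sum over all integer tuples 0 < k_1 < k_2 < ... < k_d of the product x_1^{k_1} x_2^{k_2} ... x_d^{k_d} equals the product over j = 1 to d of (x_j x_{j+1} ... x_d)/(1 - x_j x_{j+1} ... x_d). -/
/-!
Put `k_j = (m_0 + 1) + ⋯ + (m_j + 1)`: this is a bijection between `ℕ^{d+1}` and the positive
strictly increasing tuples, and it turns `x_0^{k_0} ⋯ x_d^{k_d}` into `∏_i y_i^{m_i + 1}` with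
`y_i = x_i x_{i+1} ⋯ x_d`. By absolute convergence the sum over `ℕ^{d+1}` factors into the
geometric series `∑_m y_i^{m+1} = y_i / (1 - y_i)`.
-/

open Finset

section PiProduct

variable {R β : Type*} [NormedCommRing R]

theorem summable_norm_pi_prod {n : ℕ} {f : Fin n → β → R}
    (hf : ∀ j, Summable fun k => ‖f j k‖) :
    Summable fun m : Fin n → β => ‖∏ j, f j (m j)‖ := by
  induction n with
  | zero => exact .of_finite
  | succ n ih =>
    rw [← (Fin.consEquiv fun _ => β).summable_iff]
    simp only [Function.comp_def, Fin.consEquiv, Equiv.coe_fn_mk, Fin.prod_univ_succ,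
      Fin.cons_zero, Fin.cons_succ]
    -- `(e :)` elaborates `e` before unifying with the goal; the other way round the two
    -- instance paths to `Mul R` send unification into a timeout.
    exact ((hf 0).mul_norm (ih fun j => hf j.succ) :)

theorem hasSum_pi_prod [CompleteSpace R] {n : ℕ} {f : Fin n → β → R}
    (hf : ∀ j, Summable fun k => ‖f j k‖) :
    HasSum (fun m : Fin n → β => ∏ j, f j (m j)) (∏ j, ∑' k, f j k) := by
  induction n with
  | zero => simp
  | succ n ih =>
    have hf' : ∀ j : Fin n, Summable fun k => ‖f j.succ k‖ := fun j => hf j.succ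
    rw [← (Fin.consEquiv fun _ => β).hasSum_iff]
    simp only [Function.comp_def, Fin.consEquiv, Equiv.coe_fn_mk, Fin.prod_univ_succ,
      Fin.cons_zero, Fin.cons_succ]
    have hsummable := summable_mul_of_summable_norm (hf 0) (summable_norm_pi_prod hf')
    exact ((hf 0).of_norm.hasSum.mul (ih hf') hsummable :)

end PiProduct

theorem Finset.norm_prod_lt_one {ι R : Type*} [NormedCommRing R] {s : Finset ι} {f : ι → R}
    (hs : s.Nonempty) (hf : ∀ i ∈ s, ‖f i‖ < 1) : ‖∏ i ∈ s, f i‖ < 1 := by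
  classical
  obtain ⟨j, hj⟩ := hs
  refine (s.norm_prod_le' ⟨j, hj⟩ f).trans_lt ?_
  rw [← mul_prod_erase s _ hj]
  exact mul_lt_one_of_nonneg_of_lt_one_left (norm_nonneg _) (hf j hj)
    (prod_le_one (fun _ _ => norm_nonneg _) fun i hi => (hf i (mem_of_mem_erase hi)).le)

theorem hasSum_pow_succ_of_norm_lt_one {K : Type*} [NormedDivisionRing K] {ξ : K} (h : ‖ξ‖ < 1) :
    HasSum (fun n : ℕ => ξ ^ (n + 1)) (ξ / (1 - ξ)) := by
  simpa [pow_succ', div_eq_mul_inv] using (hasSum_geometric_of_norm_lt_one h).mul_left ξ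

namespace Fin

variable {n : ℕ}

def partialSumsSucc (m : Fin n → ℕ) (j : Fin n) : ℕ := ∑ i ∈ Iic j, (m i + 1)

lemma partialSumsSucc_zero (m : Fin (n + 1) → ℕ) : partialSumsSucc m 0 = m 0 + 1 := by
  simp [partialSumsSucc, ← bot_eq_zero]

lemma partialSumsSucc_succ (m : Fin (n + 1) → ℕ) (i : Fin n) :
    partialSumsSucc m i.succ = partialSumsSucc m i.castSucc + (m i.succ + 1) := by
  have hIic : Iic i.succ = insert i.succ (Iic i.castSucc) := by
    ext a; simp [le_def, Fin.ext_iff]; omega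
  rw [partialSumsSucc, hIic, sum_insert (by simp [le_def]), add_comm, partialSumsSucc]

lemma strictMono_partialSumsSucc (m : Fin n → ℕ) : StrictMono (partialSumsSucc m) :=
  fun _ b hab => sum_lt_sum_of_subset (Iic_subset_Iic.2 hab.le) (mem_Iic.2 le_rfl)
    (by simp [hab.not_ge]) (Nat.succ_pos _) fun _ _ _ => Nat.zero_le _

lemma partialSumsSucc_pos (m : Fin n → ℕ) (j : Fin n) : 0 < partialSumsSucc m j :=
  sum_pos (fun _ _ => Nat.succ_pos _) ⟨j, mem_Iic.2 le_rfl⟩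

def partialSumsSuccEquiv (n : ℕ) :
    (Fin (n + 1) → ℕ) ≃ {k : Fin (n + 1) → ℕ // StrictMono k ∧ ∀ j, 0 < k j} where
  toFun m := ⟨partialSumsSucc m, strictMono_partialSumsSucc m, partialSumsSucc_pos m⟩
  invFun k := cons (k.1 0 - 1) fun i => k.1 i.succ - k.1 i.castSucc - 1
  left_inv m := by
    funext j
    cases j using Fin.cases with
    | zero => simp [partialSumsSucc_zero]
    | succ i => simp [partialSumsSucc_succ]
  right_inv := by
    rintro ⟨k, hk, hk0⟩
    ext j
    induction j using Fin.induction with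
    | zero =>
      simp only [partialSumsSucc_zero, cons_zero]
      have := hk0 0
      omega
    | succ i ih =>
      simp only at ih ⊢
      rw [partialSumsSucc_succ, ih, cons_succ]
      have := hk (castSucc_lt_succ (i := i))
      omega

lemma prod_pow_partialSumsSucc {M : Type*} [CommMonoid M] (x : Fin n → M) (m : Fin n → ℕ) :
    ∏ j, x j ^ partialSumsSucc m j =
      ∏ i, (∏ t ∈ univ.filter (fun t => i ≤ t), x t) ^ (m i + 1) := by
  simp_rw [partialSumsSucc, ← prod_pow_eq_pow_sum]
  rw [prod_comm' (t' := univ) (s' := fun i => univ.filter (fun t => i ≤ t))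
    (by simp)]
  simp_rw [prod_pow]

end Fin

theorem stmt_1 (d : ℕ) (x : Fin (d + 1) → ℂ) (hx : ∀ j, ‖x j‖ < 1) :
    ∑' k : {k : Fin (d + 1) → ℕ // StrictMono k ∧ ∀ j, 0 < k j},
        ∏ j, x j ^ (k.1 j) =
      ∏ j : Fin (d + 1),
        (∏ i ∈ Finset.univ.filter (fun i => j ≤ i), x i) /
          (1 - ∏ i ∈ Finset.univ.filter (fun i => j ≤ i), x i) := by
  let y : Fin (d + 1) → ℂ := fun j => ∏ i ∈ univ.filter (fun i => j ≤ i), x i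
  have hy (j) : ‖y j‖ < 1 := norm_prod_lt_one ⟨j, by simp⟩ fun i _ => hx i
  have hsum (j) : Summable fun k => ‖y j ^ (k + 1)‖ :=
    (summable_nat_add_iff 1).2 (summable_norm_geometric_of_norm_lt_one (hy j))
  have hprod := hasSum_pi_prod hsum
  simp only [fun j => (hasSum_pow_succ_of_norm_lt_one (hy j)).tsum_eq] at hprod
  refine HasSum.tsum_eq ?_
  rw [← (Fin.partialSumsSuccEquiv d).hasSum_iff]
  simpa only [Function.comp_def, Fin.partialSumsSuccEquiv, Equiv.coe_fn_mk,
    Fin.prod_pow_partialSumsSucc] using hprod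
end

section
/- Fix integers M, N, N' with M - N > 2 and a real number x > 1. Define g(q) = q^{x(M-N-2) - kM/6} · ((1-q)/(1-q^x))^{M-N+1} for a fixed positive integer k < x. Then for q in (1/2, 1), g is increasing in q, and consequently g(q) ≤ lim_{q→1⁻} g(q) = 1/x^{M-N+1}, provided M > 16 + 2N (so that M/2 - N - 8 > 0). -/
/-!
Put `c = (x - 1) / 2`. Since `q ^ a * u ^ b = q ^ (a - c b) * (q ^ c * u) ^ b` for
`u = (1 - q) / (1 - q ^ x)`, and `a ≥ c b` under the hypotheses, it suffices that
`φ q = q ^ c (1 - q) / (1 - q ^ x)` is increasing on `(0, 1)`; with `q = e^(-2t)` this is the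
statement that `sinh t / sinh (x t)` decreases in `t`. The sign of `φ'` is that of
`ψ q = (x - 1)(1 - q ^ (x + 1)) - (x + 1)(q - q ^ x)`, which vanishes at `q = 1` and is
decreasing by Bernoulli's inequality. The limit at `1⁻` is the derivative `x` of `q ^ x` at `1`.
-/

open Real Set Filter Topology

/-- Bernoulli's inequality `1 + x (1/t - 1) ≤ (1/t) ^ x`, multiplied by `t ^ x`. -/
lemma mul_rpow_sub_one_le_one_add_mul_rpow {x t : ℝ} (hx : 1 ≤ x) (ht : 0 < t) :
    x * t ^ (x - 1) ≤ 1 + (x - 1) * t ^ x := by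
  have hB := one_add_mul_self_le_rpow_one_add (s := t⁻¹ - 1) (by linarith [inv_pos.2 ht]) hx
  rw [add_sub_cancel, inv_rpow ht.le] at hB
  have hB' := mul_le_mul_of_nonneg_left hB (rpow_pos_of_pos ht x).le
  rw [mul_inv_cancel₀ (rpow_pos_of_pos ht x).ne'] at hB'
  rw [rpow_sub_one ht.ne', div_eq_mul_inv]
  linear_combination hB'

lemma add_one_mul_sub_rpow_le {x q : ℝ} (hx : 1 ≤ x) (hq0 : 0 < q) (hq1 : q ≤ 1) :
    (x + 1) * (q - q ^ x) ≤ (x - 1) * (1 - q ^ (x + 1)) := by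
  let ψ : ℝ → ℝ := fun t => (x - 1) * (1 - t ^ (x + 1)) - (x + 1) * (t - t ^ x)
  have hψ' : ∀ t ∈ Ioi (0 : ℝ),
      HasDerivAt ψ ((x + 1) * (x * t ^ (x - 1) - (1 + (x - 1) * t ^ x))) t := by
    intro t ht
    have h1 := (hasDerivAt_rpow_const (x := t) (p := x + 1) (Or.inl ht.ne')).const_sub 1
    have h2 := (hasDerivAt_id' t).sub (hasDerivAt_rpow_const (x := t) (p := x) (Or.inl ht.ne'))
    refine ((h1.const_mul (x - 1)).sub (h2.const_mul (x + 1))).congr_deriv ?_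
    rw [add_sub_cancel_right]
    ring
  have hψ_anti : AntitoneOn ψ (Ioi 0) := by
    refine antitoneOn_of_hasDerivWithinAt_nonpos (convex_Ioi 0)
      (fun t ht => (hψ' t ht).continuousAt.continuousWithinAt)
      (fun t ht => (hψ' t (interior_subset ht)).hasDerivWithinAt) fun t ht => ?_
    rw [interior_Ioi] at ht
    exact mul_nonpos_of_nonneg_of_nonpos (by linarith)
      (sub_nonpos.2 (mul_rpow_sub_one_le_one_add_mul_rpow hx ht))
  have := hψ_anti hq0 (mem_Ioi.2 one_pos) hq1
  simp only [ψ, one_rpow, sub_self, mul_zero] at this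
  linarith

lemma monotoneOn_rpow_mul_one_sub_div_one_sub_rpow {x : ℝ} (hx : 1 < x) :
    MonotoneOn (fun q : ℝ => q ^ ((x - 1) / 2) * ((1 - q) / (1 - q ^ x))) (Ioo 0 1) := by
  have hφ' : ∀ q ∈ Ioo (0 : ℝ) 1,
      HasDerivAt (fun q : ℝ => q ^ ((x - 1) / 2) * ((1 - q) / (1 - q ^ x)))
      (q ^ ((x - 1) / 2 - 1) * ((x - 1) * (1 - q ^ (x + 1)) - (x + 1) * (q - q ^ x)) /
        (2 * (1 - q ^ x) ^ 2)) q := by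
    rintro q ⟨hq0, hq1⟩
    have hw : 1 - q ^ x ≠ 0 := (sub_pos.2 (rpow_lt_one hq0.le hq1 (by linarith))).ne'
    have hu := ((hasDerivAt_id' q).const_sub 1).div
      ((hasDerivAt_rpow_const (p := x) (Or.inl hq0.ne')).const_sub 1) hw
    refine ((hasDerivAt_rpow_const (p := (x - 1) / 2) (Or.inl hq0.ne')).mul hu).congr_deriv ?_
    simp only [Pi.div_apply]
    rw [rpow_sub_one hq0.ne', rpow_sub_one hq0.ne', rpow_add_one hq0.ne']
    field_simp
    ring
  refine monotoneOn_of_hasDerivWithinAt_nonneg (convex_Ioo 0 1)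
    (fun q hq => (hφ' q hq).continuousAt.continuousWithinAt)
    (fun q hq => (hφ' q (interior_subset hq)).hasDerivWithinAt) fun q hq => ?_
  rw [interior_Ioo] at hq
  obtain ⟨hq0, hq1⟩ := hq
  have hψ := add_one_mul_sub_rpow_le hx.le hq0 hq1.le
  exact div_nonneg (mul_nonneg (rpow_nonneg hq0.le _) (by linarith)) (by positivity)

lemma monotoneOn_rpow_mul_one_sub_div_one_sub_rpow_rpow {x a b : ℝ} (hx : 1 < x) (hb : 0 ≤ b)
    (hab : b * (x - 1) / 2 ≤ a) :
    MonotoneOn (fun q : ℝ => q ^ a * ((1 - q) / (1 - q ^ x)) ^ b) (Ioo 0 1) := by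
  have hu_nonneg : ∀ q ∈ Ioo (0 : ℝ) 1, 0 ≤ (1 - q) / (1 - q ^ x) := fun q hq =>
    div_nonneg (by linarith [hq.2]) (sub_nonneg.2 (rpow_le_one hq.1.le hq.2.le (by linarith)))
  have hφ := monotoneOn_rpow_mul_one_sub_div_one_sub_rpow hx
  have hφ_nonneg : ∀ q ∈ Ioo (0 : ℝ) 1, 0 ≤ q ^ ((x - 1) / 2) * ((1 - q) / (1 - q ^ x)) :=
    fun q hq => mul_nonneg (rpow_nonneg hq.1.le _) (hu_nonneg q hq)
  have hφb : MonotoneOn (fun q : ℝ => (q ^ ((x - 1) / 2) * ((1 - q) / (1 - q ^ x))) ^ b)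
      (Ioo 0 1) := fun p hp q hq hpq => rpow_le_rpow (hφ_nonneg p hp) (hφ hp hq hpq) hb
  have hpow : MonotoneOn (fun q : ℝ => q ^ (a - b * (x - 1) / 2)) (Ioo 0 1) :=
    (monotoneOn_rpow_Ici_of_exponent_nonneg (by linarith)).mono
      (Ioo_subset_Ioi_self.trans Ioi_subset_Ici_self)
  refine (hpow.mul hφb (fun q hq => rpow_nonneg hq.1.le _)
    fun q hq => rpow_nonneg (hφ_nonneg q hq) _).congr ?_
  intro q hq
  simp only [Pi.mul_apply]
  rw [mul_rpow (rpow_nonneg hq.1.le _) (hu_nonneg q hq), ← rpow_mul hq.1.le, ← mul_assoc,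
    ← rpow_add hq.1]
  ring_nf

lemma tendsto_one_sub_div_one_sub_rpow {x : ℝ} (hx : x ≠ 0) :
    Tendsto (fun q : ℝ => (1 - q) / (1 - q ^ x)) (𝓝[≠] 1) (𝓝 x⁻¹) := by
  have hd : HasDerivAt (fun t : ℝ => t ^ x) x 1 := by
    simpa using hasDerivAt_rpow_const (x := 1) (p := x) (Or.inl one_ne_zero)
  refine ((hasDerivAt_iff_tendsto_slope.1 hd).inv₀ hx).congr fun q => ?_
  rw [slope_def_field, one_rpow, inv_div, ← neg_div_neg_eq, neg_sub, neg_sub]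

lemma tendsto_rpow_mul_one_sub_div_one_sub_rpow_rpow {x : ℝ} (hx : 0 < x) (a b : ℝ) :
    Tendsto (fun q : ℝ => q ^ a * ((1 - q) / (1 - q ^ x)) ^ b) (𝓝[≠] 1)
      (𝓝 (1 / x ^ b)) := by
  have hq : Tendsto (fun q : ℝ => q ^ a) (𝓝[≠] 1) (𝓝 1) := by
    simpa using (continuousAt_rpow_const 1 a (Or.inl one_ne_zero)).tendsto.mono_left
      nhdsWithin_le_nhds
  simpa [inv_rpow hx.le, one_div] using hq.mul
    ((tendsto_one_sub_div_one_sub_rpow hx.ne').rpow_const (Or.inl (inv_ne_zero hx.ne')))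

lemma MonotoneOn.le_of_tendsto_nhdsLT {α β : Type*} [LinearOrder α] [DenselyOrdered α]
    [TopologicalSpace α] [OrderTopology α] [Preorder β] [TopologicalSpace β]
    [OrderClosedTopology β] {f : α → β} {a b : α} {L : β} (hf : MonotoneOn f (Ioo a b))
    (hL : Tendsto f (𝓝[<] b) (𝓝 L)) {q : α} (hq : q ∈ Ioo a b) : f q ≤ L := by
  have : (𝓝[<] b).NeBot := nhdsLT_neBot_of_exists_lt ⟨q, hq.2⟩
  refine ge_of_tendsto hL ?_
  filter_upwards [Ioo_mem_nhdsLT hq.2] with t ht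
  exact hf hq ⟨hq.1.trans ht.1, ht.2⟩ ht.1.le

theorem stmt_5_general (M N : ℕ) (hMN : 16 + 2 * N < M) (x : ℝ) (hx : 1 < x)
    (k : ℕ) (hkx : (k : ℝ) < x)
    (g : ℝ → ℝ)
    (hg : g = fun q => q ^ (x * ((M : ℝ) - N - 2) - k * M / 6) *
        ((1 - q) / (1 - q ^ x)) ^ ((M : ℝ) - N + 1)) :
    MonotoneOn g (Ioo (1/2 : ℝ) 1) ∧
    (∀ q ∈ Ioo (1/2 : ℝ) 1, g q ≤ 1 / x ^ ((M : ℝ) - N + 1)) ∧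
    Filter.Tendsto g (nhdsWithin 1 (Iio (1 : ℝ)))
      (nhds (1 / x ^ ((M : ℝ) - N + 1))) := by
  have hM : (17 : ℝ) + 2 * N ≤ M := by exact_mod_cast (by omega : 17 + 2 * N ≤ M)
  have hab : ((M : ℝ) - N + 1) * (x - 1) / 2 ≤ x * ((M : ℝ) - N - 2) - k * M / 6 := by
    -- `k M ≤ x M`, and the slack `x (M / 3 - N / 2 - 5 / 2)` is nonnegative as `M ≥ 17 + 2 N`
    nlinarith [mul_le_mul_of_nonneg_right hkx.le (Nat.cast_nonneg (α := ℝ) M)]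
  have hmono : MonotoneOn g (Ioo (1/2 : ℝ) 1) := hg ▸
    (monotoneOn_rpow_mul_one_sub_div_one_sub_rpow_rpow hx (by linarith) hab).mono
      (Ioo_subset_Ioo_left (by norm_num))
  have hlim : Tendsto g (𝓝[<] 1) (𝓝 (1 / x ^ ((M : ℝ) - N + 1))) := hg ▸
    (tendsto_rpow_mul_one_sub_div_one_sub_rpow_rpow (by linarith) _ _).mono_left
      (nhdsLT_le_nhdsNE 1)
  exact ⟨hmono, fun q hq => hmono.le_of_tendsto_nhdsLT hlim hq, hlim⟩

theorem stmt_5 (M N : ℕ) (hMN : 16 + 2 * N < M) (x : ℝ) (hx : 1 < x)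
    (k : ℕ) (hk : 0 < k) (hkx : (k : ℝ) < x)
    (g : ℝ → ℝ)
    (hg : g = fun q => q ^ (x * ((M : ℝ) - N - 2) - k * M / 6) *
        ((1 - q) / (1 - q ^ x)) ^ ((M : ℝ) - N + 1)) :
    MonotoneOn g (Ioo (1/2 : ℝ) 1) ∧
    (∀ q ∈ Ioo (1/2 : ℝ) 1, g q ≤ 1 / x ^ ((M : ℝ) - N + 1)) ∧
    Filter.Tendsto g (nhdsWithin 1 (Iio (1 : ℝ)))
      (nhds (1 / x ^ ((M : ℝ) - N + 1))) :=
  stmt_5_general M N hMN x hx k hkx g hg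
end

section
/- For nonnegative integers m, n and k = m + n + 2, one has Σ_{r=0}^{m} (-1)^{r+k+n} · m! · n! / (r! · (k-r)!) = 1/(k·(n+1)). -/
/-!
Writing `1 / (r! (k-r)!) = C(k, r) / k!`, the sum becomes `(-1)^(k+n) m! n! / k!` times the
partial alternating sum `∑_{r ≤ m} (-1)^r C(k, r)`, which telescopes by Pascal's rule to
`(-1)^m C(k-1, m)`. Since `k - 1 = m + (n + 1)`, the product `m! n! C(k-1, m)` equals
`(k-1)! / (n+1)`, and `k! = k (k-1)!` gives the result.
-/

open Finset Nat

section

variable {K : Type*} [Field K] [CharZero K]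

theorem sum_range_neg_one_pow_div_factorial_mul_factorial {m j : ℕ} (h : m ≤ j + 1) :
    ∑ r ∈ range (m + 1), (-1 : K) ^ r / (r ! * (j + 1 - r)!) =
      (-1) ^ m * j.choose m / (j + 1)! := by
  have hterm : ∀ r ∈ range (m + 1),
      (-1 : K) ^ r / (r ! * (j + 1 - r)!) = (-1) ^ r * (j + 1).choose r / (j + 1)! := by
    intro r hr
    have : ((j + 1)! : K) ≠ 0 := mod_cast factorial_ne_zero _
    rw [cast_choose K (by grind)]
    field_simp
  rw [sum_congr rfl hterm, ← sum_div]
  exact_mod_cast congrArg (fun z : ℤ => (z : K) / (j + 1)!)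
    Int.alternating_sum_range_choose_eq_choose

theorem factorial_mul_factorial_mul_add_choose_div (m n : ℕ) :
    (m ! * n ! * (m + n + 1).choose m : K) / (m + n + 2)! = 1 / ((m + n + 2) * (n + 1)) := by
  have h : (m + n + 1).choose m * ((n + 1) * n !) * m ! = (m + n + 1)! := by
    rw [← factorial_succ, show m + n + 1 = n + 1 + m by ring]
    exact add_choose_mul_factorial_mul_factorial (n + 1) m
  rw [show m + n + 2 = m + n + 1 + 1 by ring, factorial_succ,
    div_eq_div_iff (mod_cast (m + n + 1 + 1).factorial_ne_zero) (by norm_cast)]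
  replace h : ((m + n + 1).choose m * ((n + 1) * n !) * m ! : K) = (m + n + 1)! := mod_cast h
  push_cast
  linear_combination (m + n + 2 : K) * h

end

theorem stmt_7 (m n : ℕ) (k : ℕ) (hk : k = m + n + 2) :
    ∑ r ∈ Finset.range (m + 1),
      ((-1 : ℚ) ^ (r + k + n) * (Nat.factorial m) * (Nat.factorial n) /
        ((Nat.factorial r) * (Nat.factorial (k - r)))) = 1 / (k * (n + 1)) := by
  subst hk
  have hsign : (-1 : ℚ) ^ (m + n + 2 + n) * (-1) ^ m = 1 := by
    rw [← pow_add]; exact Even.neg_one_pow ⟨m + n + 1, by ring⟩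
  calc _ = (-1 : ℚ) ^ (m + n + 2 + n) * m ! * n !
        * ∑ r ∈ range (m + 1), (-1 : ℚ) ^ r / (r ! * (m + n + 1 + 1 - r)!) := by
        rw [mul_sum]; refine sum_congr rfl fun r _ => ?_; ring
    _ = (m ! * n ! * (m + n + 1).choose m : ℚ) / (m + n + 2)! := by
        rw [sum_range_neg_one_pow_div_factorial_mul_factorial (by omega)]
        linear_combination (m ! * n ! * (m + n + 1).choose m / (m + n + 2)! : ℚ) * hsign
    _ = _ := by push_cast; exact factorial_mul_factorial_mul_add_choose_div m n
end

section
/- Let 0 < q < 1 and let s_1, ..., s_d, t_1, ..., t_d be complex numbers such that Re(t_j + t_{j+1} + ... + t_d) > 0 for every j = 1, ..., d. Then the series f_q(s_1,...,s_d; t_1,...,t_d) = Σ_{0 < k_1 < ... < k_d} q^{k_1 t_1 + ... + k_d t_d} / ([k_1]^{s_1} ... [k_d]^{s_d}) converges absolutely, where [k] = (1-q^k)/(1-q). -/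
/-!
For `k ≥ 1` we have `1 ≤ [k] ≤ 1/(1-q)`, so `‖[k]^s‖ ≥ (1-q)^|Re s|` and it suffices to sum
`q^(Re ∑ k_j t_j)`. Writing `k_j = ∑_{i ≤ j} (m_i + 1)` with `m` ranging freely over `ℕ^{d+1}`,
summation by parts turns the exponent into `∑_i (m_i + 1) Re(t_i + ⋯ + t_d)`, so the sum factors
into a product of geometric series with ratios `q^(Re(t_i + ⋯ + t_d)) < 1`.
-/

open Finset

/-- The q-analog `[k] = (1-q^k)/(1-q)`. -/
noncomputable def qnum (q : ℝ) (k : ℕ) : ℝ := (1 - q ^ k) / (1 - q)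

theorem summable_fin_pi_prod_of_nonneg {n : ℕ} {β : Fin n → Type*} {f : (i : Fin n) → β i → ℝ}
    (hf0 : ∀ i b, 0 ≤ f i b) (hf : ∀ i, Summable (f i)) :
    Summable fun m : (∀ i, β i) => ∏ i, f i (m i) := by
  induction n with
  | zero => exact Summable.of_finite
  | succ n ih =>
    rw [← (Fin.consEquiv β).summable_iff]
    have := (hf 0).mul_of_nonneg (ih (fun i => hf0 i.succ) (fun i => hf i.succ)) (hf0 0)
      fun m => prod_nonneg fun i _ => hf0 i.succ (m i)
    simpa [Function.comp_def, Fin.consEquiv, Fin.prod_univ_succ] using this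

theorem sum_prefixSum_mul_eq_sum_mul_suffixSum {ι R : Type*} [Fintype ι] [Preorder ι]
    [DecidableLE ι] [CommSemiring R] (a τ : ι → R) :
    ∑ j, (∑ i with i ≤ j, a i) * τ j = ∑ i, a i * ∑ j with i ≤ j, τ j := by
  simp_rw [sum_mul, mul_sum, sum_filter]
  rw [sum_comm]

theorem rpow_abs_le_rpow {c x : ℝ} (a : ℝ) (hc : 0 < c) (hx : 1 ≤ x) (hxc : x ≤ c⁻¹) :
    c ^ |a| ≤ x ^ a := by
  rcases le_or_gt 0 a with ha | ha
  · have hc1 : c ≤ 1 := (one_le_inv₀ hc).1 (hx.trans hxc)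
    calc c ^ |a| ≤ 1 := Real.rpow_le_one hc.le hc1 (abs_nonneg a)
      _ ≤ x ^ a := Real.one_le_rpow hx ha
  · calc c ^ |a| = c⁻¹ ^ a := by rw [abs_of_neg ha, Real.inv_rpow hc.le, ← Real.rpow_neg hc.le]
      _ ≤ x ^ a := Real.rpow_le_rpow_of_nonpos (by linarith) hxc ha.le

section qnum
variable {q : ℝ}

theorem one_le_qnum (hq0 : 0 ≤ q) (hq1 : q < 1) {k : ℕ} (hk : 0 < k) : 1 ≤ qnum q k := by
  rw [qnum, one_le_div₀ (by linarith)]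
  linarith [pow_le_of_le_one hq0 hq1.le hk.ne']

theorem qnum_le_inv_one_sub (hq0 : 0 ≤ q) (hq1 : q < 1) (k : ℕ) : qnum q k ≤ (1 - q)⁻¹ := by
  rw [qnum, div_eq_mul_inv]
  exact mul_le_of_le_one_left (inv_nonneg.2 (by linarith)) (sub_le_self _ (pow_nonneg hq0 k))

theorem one_sub_rpow_le_norm_qnum_cpow (hq0 : 0 ≤ q) (hq1 : q < 1) {k : ℕ} (hk : 0 < k) (s : ℂ) :
    (1 - q) ^ |s.re| ≤ ‖(qnum q k : ℂ) ^ s‖ := by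
  have hk1 := one_le_qnum hq0 hq1 hk
  rw [Complex.norm_cpow_eq_rpow_re_of_pos (by linarith)]
  exact rpow_abs_le_rpow _ (by linarith) hk1 (qnum_le_inv_one_sub hq0 hq1 k)

end qnum

section gaps
variable {n : ℕ}

def ofGaps (m : Fin (n + 1) → ℕ) (j : Fin (n + 1)) : ℕ := ∑ i with i ≤ j, (m i + 1)

/-- `gaps k j = k j - k (j - 1) - 1`, with `k (-1) = 0`. -/
def gaps (k : Fin (n + 1) → ℕ) (j : Fin (n + 1)) : ℕ :=
  k j - Fin.cases 0 (fun i : Fin n => k i.castSucc) j - 1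

theorem ofGaps_zero (m : Fin (n + 1) → ℕ) : ofGaps m 0 = m 0 + 1 := by
  simp [ofGaps, sum_filter]

theorem ofGaps_succ (m : Fin (n + 1) → ℕ) (i : Fin n) :
    ofGaps m i.succ = ofGaps m i.castSucc + (m i.succ + 1) := by
  have : univ.filter (· ≤ i.succ) = insert i.succ (univ.filter (· ≤ i.castSucc)) := by
    ext a
    simp only [mem_filter, mem_insert, mem_univ, true_and, Fin.le_def, Fin.ext_iff, Fin.val_succ,
      Fin.val_castSucc]
    omega
  rw [ofGaps, this, sum_insert (by simp [Fin.le_def]), add_comm, ofGaps]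

theorem strictMono_ofGaps (m : Fin (n + 1) → ℕ) : StrictMono (ofGaps m) := by
  refine Fin.strictMono_iff_lt_succ.2 fun i => ?_
  rw [ofGaps_succ]
  omega

theorem ofGaps_pos (m : Fin (n + 1) → ℕ) (j : Fin (n + 1)) : 0 < ofGaps m j :=
  sum_pos (fun _ _ => Nat.succ_pos _) ⟨j, by simp⟩

theorem gaps_ofGaps (m : Fin (n + 1) → ℕ) : gaps (ofGaps m) = m := by
  ext j
  induction j using Fin.cases with
  | zero => simp [gaps, ofGaps_zero]
  | succ i => simp [gaps, ofGaps_succ]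

theorem ofGaps_gaps {k : Fin (n + 1) → ℕ} (hk : StrictMono k) (hpos : ∀ j, 0 < k j) :
    ofGaps (gaps k) = k := by
  ext j
  induction j using Fin.induction with
  | zero =>
    have := hpos 0
    simp only [ofGaps_zero, gaps, Fin.cases_zero]
    omega
  | succ i ih =>
    have := hk (Fin.castSucc_lt_succ (i := i))
    simp only [ofGaps_succ, ih, gaps, Fin.cases_succ]
    omega

def gapsEquiv (n : ℕ) :
    (Fin (n + 1) → ℕ) ≃ {k : Fin (n + 1) → ℕ // StrictMono k ∧ ∀ j, 0 < k j} where
  toFun m := ⟨ofGaps m, strictMono_ofGaps m, ofGaps_pos m⟩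
  invFun k := gaps k.1
  left_inv := gaps_ofGaps
  right_inv k := Subtype.ext (ofGaps_gaps k.2.1 k.2.2)

end gaps

theorem rpow_re_sum_ofGaps_mul {q : ℝ} (hq0 : 0 < q) {n : ℕ} (t : Fin (n + 1) → ℂ)
    (m : Fin (n + 1) → ℕ) :
    q ^ (∑ j, (ofGaps m j : ℂ) * t j).re =
      ∏ i, (q ^ (∑ j ∈ univ.filter (fun j => i ≤ j), t j).re) ^ (m i + 1) := by
  have habel := sum_prefixSum_mul_eq_sum_mul_suffixSum (fun i => (m i + 1 : ℂ)) t
  simp only [ofGaps, Nat.cast_sum, Nat.cast_add, Nat.cast_one] at habel ⊢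
  rw [habel, Complex.re_sum, Real.rpow_sum_of_pos hq0]
  refine prod_congr rfl fun i _ => ?_
  rw [← Real.rpow_mul_natCast hq0.le, mul_comm]
  simp [Complex.mul_re]

theorem summable_rpow_re_sum_mul_strictMono {q : ℝ} (hq0 : 0 < q) (hq1 : q < 1) {n : ℕ}
    (t : Fin (n + 1) → ℂ) (ht : ∀ j, 0 < (∑ i ∈ univ.filter (fun i => j ≤ i), t i).re) :
    Summable fun k : {k : Fin (n + 1) → ℕ // StrictMono k ∧ ∀ j, 0 < k j} =>
      q ^ (∑ j, (k.1 j : ℂ) * t j).re := by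
  rw [← (gapsEquiv n).summable_iff]
  simp only [Function.comp_def, gapsEquiv, Equiv.coe_fn_mk, rpow_re_sum_ofGaps_mul hq0]
  set r : Fin (n + 1) → ℝ := fun i => q ^ (∑ j ∈ univ.filter (fun j => i ≤ j), t j).re
  have hr0 (i : Fin (n + 1)) : 0 ≤ r i := Real.rpow_nonneg hq0.le _
  refine summable_fin_pi_prod_of_nonneg (f := fun i (m : ℕ) => r i ^ (m + 1))
    (fun i m => pow_nonneg (hr0 i) _) fun i => ?_
  have hr := summable_geometric_of_lt_one (hr0 i) (Real.rpow_lt_one hq0.le hq1 (ht i))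
  simpa only [pow_succ] using hr.mul_right (r i)

theorem stmt_9 (q : ℝ) (hq0 : 0 < q) (hq1 : q < 1) (d : ℕ)
    (s t : Fin (d + 1) → ℂ)
    (ht : ∀ j, 0 < (∑ i ∈ Finset.univ.filter (fun i => j ≤ i), t i).re) :
    Summable (fun k : {k : Fin (d + 1) → ℕ // StrictMono k ∧ ∀ j, 0 < k j} =>
      (q : ℂ) ^ (∑ j, (k.1 j : ℂ) * t j) /
        ∏ j, (qnum q (k.1 j) : ℂ) ^ (s j)) := by
  refine ((summable_rpow_re_sum_mul_strictMono hq0 hq1 t ht).div_const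
    (∏ j, (1 - q) ^ |(s j).re|)).of_norm_bounded fun k => ?_
  rw [norm_div, norm_prod, Complex.norm_cpow_eq_rpow_re_of_pos hq0]
  gcongr
  exact one_sub_rpow_le_norm_qnum_cpow hq0.le hq1 (k.2.2 _) _
end

section
/- Let 0 < q < 1 and let f be a continuous function on [a, b]. Then lim_{q→1⁻} ∫_a^b f(t) d_q t = ∫_a^b f(t) dt, where ∫_a^b f(t) d_q t = Σ_{i=0}^{∞} f(a + q^i(b-a))(q^i - q^{i+1})(b-a) is Jackson's q-integral and the right-hand side is the Riemann integral. -/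
/-!
With the nodes `x i = a + q ^ i * (b - a)`, which decrease from `b` to `a`, the Jackson sum is
the right-endpoint Riemann sum `∑ (x i - x (i + 1)) • f (x i)`, with mesh `(1 - q) * (b - a)`.
The integral splits as the (absolutely convergent) series of the integrals over
`[x (i + 1), x i]`, so comparing term by term, uniform continuity of `f` bounds the error by
`ε * (b - a)` as soon as the mesh is below the modulus `δ` of `ε`, i.e. for `q` close to `1`.
-/

open Set Filter Topology intervalIntegral

theorem Summable.hasSum_sub_succ {G : Type*} [AddCommGroup G] [TopologicalSpace G]
    [IsTopologicalAddGroup G] [T2Space G] {g : ℕ → G} {l : G}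
    (hs : Summable fun i => g i - g (i + 1)) (hg : Tendsto g atTop (𝓝 l)) :
    HasSum (fun i => g i - g (i + 1)) (g 0 - l) :=
  hs.hasSum_iff_tendsto_nat.mpr <| by
    simpa only [Finset.sum_range_sub'] using tendsto_const_nhds.sub hg

section AntitoneSequence

variable {a : ℝ} {x : ℕ → ℝ}

theorem Antitone.hasSum_sub_succ (hx : Antitone x) (hlim : Tendsto x atTop (𝓝 a)) :
    HasSum (fun i => x i - x (i + 1)) (x 0 - a) :=
  (hasSum_iff_tendsto_nat_of_nonneg (fun i => sub_nonneg.2 (hx i.le_succ)) _).mpr <| by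
    simpa only [Finset.sum_range_sub'] using tendsto_const_nhds.sub hlim

theorem Antitone.mem_Icc_of_tendsto (hx : Antitone x) (hlim : Tendsto x atTop (𝓝 a)) (i : ℕ) :
    x i ∈ Icc a (x 0) :=
  ⟨hx.le_of_tendsto hlim i, hx i.zero_le⟩

end AntitoneSequence

section RiemannSums

variable {E : Type*} [NormedAddCommGroup E] [NormedSpace ℝ E] [CompleteSpace E]
  {f : ℝ → E} {a b q ε δ : ℝ} {x : ℕ → ℝ}

theorem hasSum_intervalIntegral_of_antitone (hf : ContinuousOn f (Icc a b)) (hx : Antitone x)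
    (hx0 : x 0 = b) (hlim : Tendsto x atTop (𝓝 a)) :
    HasSum (fun i => ∫ t in x (i + 1)..x i, f t) (∫ t in a..b, f t) := by
  subst hx0
  have hmem := hx.mem_Icc_of_tendsto hlim
  have huIcc : uIcc a (x 0) = Icc a (x 0) := uIcc_of_le (hmem 0).1
  have hint : ∀ u ∈ Icc a (x 0), IntervalIntegrable f MeasureTheory.volume a u := fun u hu =>
    (hf.mono (uIcc_subset_Icc (left_mem_Icc.2 (hmem 0).1) hu)).intervalIntegrable
  set P : ℝ → E := fun u => ∫ t in a..u, f t
  have hterm : ∀ i, ∫ t in x (i + 1)..x i, f t = P (x i) - P (x (i + 1)) := fun i =>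
    (integral_interval_sub_left (hint _ (hmem i)) (hint _ (hmem (i + 1)))).symm
  obtain ⟨M, hM⟩ := isCompact_Icc.exists_bound_of_continuousOn hf
  have hbound : ∀ i, ‖∫ t in x (i + 1)..x i, f t‖ ≤ M * (x i - x (i + 1)) := by
    intro i
    have hle := hx i.le_succ
    rw [← abs_of_nonneg (sub_nonneg.2 hle)]
    refine norm_integral_le_of_norm_le_const fun t ht => hM t ?_
    rw [uIoc_of_le hle] at ht
    exact ⟨(hmem (i + 1)).1.trans ht.1.le, ht.2.trans (hmem i).2⟩
  have hsum : Summable fun i => ∫ t in x (i + 1)..x i, f t :=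
    .of_norm_bounded ((hx.hasSum_sub_succ hlim).summable.mul_left M) hbound
  have hP : Tendsto (P ∘ x) atTop (𝓝 (P a)) := by
    have hPcont : ContinuousOn P (Icc a (x 0)) := by
      rw [← huIcc] at hf ⊢
      exact continuousOn_primitive_interval (hf.integrableOn_compact isCompact_uIcc)
    exact (hPcont a (left_mem_Icc.2 (hmem 0).1)).tendsto.comp
      (tendsto_nhdsWithin_iff.2 ⟨hlim, Eventually.of_forall hmem⟩)
  simp only [hterm] at hsum ⊢
  simpa [P] using hsum.hasSum_sub_succ hP

theorem norm_smul_sub_intervalIntegral_le {u v : ℝ} (huv : u ≤ v)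
    (hf : IntervalIntegrable f MeasureTheory.volume u v)
    (hfv : ∀ t ∈ Icc u v, dist (f v) (f t) ≤ ε) :
    ‖(v - u) • f v - ∫ t in u..v, f t‖ ≤ ε * (v - u) := by
  rw [← integral_const, ← integral_sub intervalIntegrable_const hf,
    ← abs_of_nonneg (sub_nonneg.2 huv)]
  refine norm_integral_le_of_norm_le_const fun t ht => ?_
  rw [← dist_eq_norm]
  exact hfv t (Ioc_subset_Icc_self (uIoc_of_le huv ▸ ht))

theorem dist_tsum_smul_intervalIntegral_le (hf : ContinuousOn f (Icc a b)) (hx : Antitone x)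
    (hx0 : x 0 = b) (hlim : Tendsto x atTop (𝓝 a)) (hmesh : ∀ i, x i - x (i + 1) ≤ δ)
    (hfδ : ∀ s ∈ Icc a b, ∀ t ∈ Icc a b, dist s t ≤ δ → dist (f s) (f t) ≤ ε) :
    dist (∑' i, (x i - x (i + 1)) • f (x i)) (∫ t in a..b, f t) ≤ ε * (b - a) := by
  have hmem : ∀ i, x i ∈ Icc a b := hx0 ▸ hx.mem_Icc_of_tendsto hlim
  have hlen := hx.hasSum_sub_succ hlim
  rw [hx0] at hlen
  have hI := hasSum_intervalIntegral_of_antitone hf hx hx0 hlim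
  have herr : ∀ i, ‖(x i - x (i + 1)) • f (x i) - ∫ t in x (i + 1)..x i, f t‖ ≤
      ε * (x i - x (i + 1)) := by
    intro i
    have hsub : Icc (x (i + 1)) (x i) ⊆ Icc a b := Icc_subset_Icc (hmem (i + 1)).1 (hmem i).2
    refine norm_smul_sub_intervalIntegral_le (hx i.le_succ)
      ((hf.mono (uIcc_of_le (hx i.le_succ) ▸ hsub)).intervalIntegrable) fun t ht => ?_
    refine hfδ _ (hmem i) _ (hsub ht) ?_
    rw [Real.dist_eq, abs_of_nonneg (sub_nonneg.2 ht.2)]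
    linarith [hmesh i, ht.1]
  have hsum := (Summable.of_norm_bounded (hlen.summable.mul_left ε) herr).hasSum.add hI
  simp only [sub_add_cancel] at hsum
  rw [hsum.tsum_eq, dist_eq_norm, add_sub_cancel_right]
  exact tsum_of_norm_bounded (hlen.mul_left ε) herr

theorem dist_jacksonSum_intervalIntegral_le (hab : a ≤ b) (hq0 : 0 ≤ q) (hq1 : q < 1)
    (hf : ContinuousOn f (Icc a b)) (hqδ : (1 - q) * (b - a) ≤ δ)
    (hfδ : ∀ s ∈ Icc a b, ∀ t ∈ Icc a b, dist s t ≤ δ → dist (f s) (f t) ≤ ε) :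
    dist (∑' i : ℕ, ((q ^ i - q ^ (i + 1)) * (b - a)) • f (a + q ^ i * (b - a)))
      (∫ t in a..b, f t) ≤ ε * (b - a) := by
  set x : ℕ → ℝ := fun i => a + q ^ i * (b - a)
  have hstep : ∀ i, x i - x (i + 1) = (q ^ i - q ^ (i + 1)) * (b - a) := fun i => by
    simp only [x]; ring
  have hx : Antitone x := fun i j hij =>
    add_le_add_right (mul_le_mul_of_nonneg_right (pow_le_pow_of_le_one hq0 hq1.le hij)
      (sub_nonneg.2 hab)) a
  have hlim : Tendsto x atTop (𝓝 a) := by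
    simpa using tendsto_const_nhds.add
      ((tendsto_pow_atTop_nhds_zero_of_lt_one hq0 hq1).mul_const (b - a))
  have hmesh : ∀ i, x i - x (i + 1) ≤ δ := fun i => by
    rw [hstep, pow_succ, ← mul_one_sub, mul_assoc]
    have hmesh0 : 0 ≤ (1 - q) * (b - a) := mul_nonneg (sub_nonneg.2 hq1.le) (sub_nonneg.2 hab)
    exact (mul_le_of_le_one_left hmesh0 (pow_le_one₀ hq0 hq1.le)).trans hqδ
  have hdist := dist_tsum_smul_intervalIntegral_le hf hx (by simp [x]) hlim hmesh hfδ
  simpa only [hstep] using hdist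

end RiemannSums

theorem stmt_17 (a b : ℝ) (hab : a < b) (f : ℝ → ℂ) (hf : ContinuousOn f (Icc a b)) :
    Filter.Tendsto
      (fun q : ℝ => ∑' i : ℕ, f (a + q ^ i * (b - a)) * ((q ^ i - q ^ (i + 1)) * (b - a)))
      (nhdsWithin 1 (Ioo (0 : ℝ) 1))
      (nhds (∫ t in a..b, f t)) := by
  rw [Metric.tendsto_nhds]
  intro ε hε
  obtain ⟨η, hη, hηε⟩ := exists_pos_mul_lt hε (b - a)
  obtain ⟨δ, hδ, hfδ⟩ := Metric.uniformContinuousOn_iff_le.mp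
    (isCompact_Icc.uniformContinuousOn_of_continuous hf) η hη
  have hmesh : ∀ᶠ q in 𝓝 1, (1 - q) * (b - a) ≤ δ := by
    have hlim : Tendsto (fun q : ℝ => (1 - q) * (b - a)) (𝓝 1) (𝓝 0) :=
      Continuous.tendsto' (by fun_prop) 1 0 (by simp)
    exact hlim.eventually (ge_mem_nhds hδ)
  filter_upwards [nhdsWithin_le_nhds hmesh, self_mem_nhdsWithin] with q hqδ hq
  have hdist := dist_jacksonSum_intervalIntegral_le hab.le hq.1.le hq.2 hf hqδ hfδ
  have hS : ∀ i : ℕ, f (a + q ^ i * (b - a)) * ((q ^ i - q ^ (i + 1)) * (b - a)) =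
      ((q ^ i - q ^ (i + 1)) * (b - a) : ℝ) • f (a + q ^ i * (b - a)) := fun i => by
    rw [Complex.real_smul, mul_comm]
    push_cast
    rfl
  simp only [hS]
  linarith
end

section
/- Let m, n, k be nonnegative integers with k = m + n + 2 and let i be an integer with 0 < i < k. Then V(m,n,i,j) := Σ_{r_1=0}^{m} Σ_{r_2=0}^{n+1} ((-1)^{k+r_1+r_2}/(n+1)) · C(m, r_1) · C(n+1, r_2) · (n+1-r_2)^i · (k-r_1-r_2)^{j-1} satisfies: V(m,n,i,j) = 0 whenever j ≥ 1 and i + j < k, and V(m,n,i,j) = (-1)^k · n! · (k-i-1)!/(n+1-i)! whenever j ≥ 1, i + j = k and i ≤ n+1. -/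
/-!
Put `a = n + 1 - r₂` and `b = m - r₁`. Up to the factor `-1/(n+1)`, `V m n i j` becomes
`∑ₐ ∑_b (-1)^(a+b) C(n+1,a) C(m,b) a^i (a+b+1)^(j-1)`, the mixed forward difference
`Δₓ^(n+1) Δ_y^m` of `x^i (x+y+1)^(j-1)` at the origin. Summing over `b` first gives a polynomial
`G` in `a` of degree at most `j-1-m`, whose coefficient of degree `j-1-m` is `(-1)^m m! C(j-1,m)`.
The `N`-th difference of a polynomial of degree at most `N` is `N!` times its coefficient of
`x^N`. Since `a^i G` has degree at most `i+j-1-m ≤ n+1`, this coefficient is zero when `i+j < k`,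
and when `i+j = k` only the top coefficient of `G` contributes.
-/

/-- `V(m,n,i,j)` from the paper's evaluation of `ζ_q^R` at nonpositive integers. -/
noncomputable def V (m n i j : ℕ) : ℚ :=
  ∑ r₁ ∈ Finset.range (m + 1), ∑ r₂ ∈ Finset.range (n + 2),
    ((-1 : ℚ) ^ (m + n + 2 + r₁ + r₂) / (n + 1)) * (Nat.choose m r₁) *
      (Nat.choose (n + 1) r₂) * ((n + 1 - r₂ : ℕ) : ℚ) ^ i *
        ((m + n + 2 - r₁ - r₂ : ℕ) : ℚ) ^ (j - 1)

open Finset Polynomial Function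

section

variable {R : Type*} [CommRing R]

theorem neg_one_pow_sub_of_le {N r : ℕ} (h : r ≤ N) :
    (-1 : R) ^ (N - r) = (-1) ^ N * (-1) ^ r := by
  obtain ⟨s, rfl⟩ := Nat.exists_eq_add_of_le h
  rw [Nat.add_sub_cancel_left, pow_add, mul_comm, ← mul_assoc, ← pow_add,
    Even.neg_one_pow ⟨r, rfl⟩, one_mul]

theorem sum_alternating_choose_mul_eval_of_natDegree_le {N : ℕ} {P : R[X]}
    (hP : P.natDegree ≤ N) :
    ∑ r ∈ range (N + 1), (-1) ^ r * N.choose r * P.eval (r : R) =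
      (-1) ^ N * N.factorial * P.coeff N := by
  have hΔ : (fwdDiff 1)^[N] P.eval 0 =
      (-1) ^ N * ∑ r ∈ range (N + 1), (-1) ^ r * N.choose r * P.eval (r : R) := by
    rw [fwdDiff_iter_eq_sum_shift, mul_sum]
    refine sum_congr rfl fun r hr => ?_
    rw [neg_one_pow_sub_of_le (Nat.lt_succ_iff.mp (mem_range.mp hr)), zsmul_eq_mul, zero_add,
      nsmul_one]
    push_cast
    ring
  have hN : (fwdDiff 1)^[N] P.eval 0 = N.factorial * P.coeff N := by
    rcases hP.lt_or_eq with hlt | rfl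
    · rw [fwdDiff_iter_eq_zero_of_degree_lt hlt, coeff_eq_zero_of_natDegree_lt hlt]
      simp
    · rw [fwdDiff_iter_degree_eq_factorial]
      simp [mul_comm]
  rw [mul_assoc, ← hN, hΔ, ← mul_assoc, ← pow_add, Even.neg_one_pow ⟨N, rfl⟩, one_mul]

theorem sum_alternating_choose_mul_reflect (N : ℕ) (f : ℕ → R) :
    ∑ r ∈ range (N + 1), (-1) ^ r * N.choose r * f (N - r) =
      (-1) ^ N * ∑ r ∈ range (N + 1), (-1) ^ r * N.choose r * f r := by
  rw [← sum_range_reflect, mul_sum]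
  refine sum_congr rfl fun r hr => ?_
  have hr : r ≤ N := Nat.lt_succ_iff.mp (mem_range.mp hr)
  rw [Nat.add_sub_cancel, Nat.sub_sub_self hr, Nat.choose_symm hr, neg_one_pow_sub_of_le hr]
  ring

/-- As a polynomial in `x`, `(-1)^m` times the `m`-th forward difference in `y` of
`(x + y + c)^e` at `y = 0`. -/
noncomputable def altChooseSumPow (m e : ℕ) (c : R) : R[X] :=
  ∑ b ∈ range (m + 1), C ((-1 : R) ^ b * m.choose b) * (X + C ((b : R) + c)) ^ e

theorem eval_altChooseSumPow (m e : ℕ) (c x : R) :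
    (altChooseSumPow m e c).eval x =
      ∑ b ∈ range (m + 1), (-1) ^ b * m.choose b * (x + b + c) ^ e := by
  simp [altChooseSumPow, eval_finsetSum, add_assoc]

theorem coeff_altChooseSumPow {m e d : ℕ} (c : R) (h : e ≤ m + d) :
    (altChooseSumPow m e c).coeff d =
      (-1) ^ m * m.factorial * e.choose d * ((e - d).choose m * c ^ (e - d - m)) := by
  have hdeg : ((X + C c) ^ (e - d)).natDegree ≤ m := by
    have hlin : (X + C c).natDegree ≤ 1 := natDegree_add_C.trans_le natDegree_X_le
    have := natDegree_pow_le_of_le (e - d) hlin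
    omega
  calc (altChooseSumPow m e c).coeff d
      = (e.choose d : R) * ∑ b ∈ range (m + 1),
          (-1 : R) ^ b * m.choose b * ((X + C c) ^ (e - d)).eval (b : R) := by
        simp only [altChooseSumPow, finsetSum_coeff, coeff_C_mul, coeff_X_add_C_pow, mul_sum]
        refine sum_congr rfl fun b _ => ?_
        simp only [eval_pow, eval_add, eval_X, eval_C]
        ring
    _ = _ := by
        rw [sum_alternating_choose_mul_eval_of_natDegree_le hdeg, coeff_X_add_C_pow]
        ring

theorem coeff_altChooseSumPow_of_lt {m e d : ℕ} (c : R) (h : e < m + d) :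
    (altChooseSumPow m e c).coeff d = 0 := by
  rw [coeff_altChooseSumPow c h.le]
  rcases lt_or_ge e d with hed | hde
  · simp [Nat.choose_eq_zero_of_lt hed]
  · simp [Nat.choose_eq_zero_of_lt (by omega : e - d < m)]

theorem coeff_altChooseSumPow_add_self (m d : ℕ) (c : R) :
    (altChooseSumPow m (m + d) c).coeff d = (-1) ^ m * m.factorial * (m + d).choose d := by
  rw [coeff_altChooseSumPow c le_rfl, Nat.add_sub_cancel, Nat.sub_self]
  simp

theorem alternating_double_sum_eq_coeff {N m i e : ℕ} (c : R) (h : i + e ≤ N + m) :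
    ∑ a ∈ range (N + 1), (-1) ^ a * N.choose a * (a : R) ^ i *
        ∑ b ∈ range (m + 1), (-1) ^ b * m.choose b * ((a : R) + b + c) ^ e =
      (-1) ^ N * N.factorial * (X ^ i * altChooseSumPow m e c).coeff N := by
  have hdeg : (X ^ i * altChooseSumPow m e c).natDegree ≤ N := by
    refine natDegree_le_iff_coeff_eq_zero.mpr fun d hd => ?_
    rw [coeff_X_pow_mul']
    split_ifs
    · exact coeff_altChooseSumPow_of_lt c (by omega)
    · rfl
  rw [← sum_alternating_choose_mul_eval_of_natDegree_le hdeg]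
  simp only [eval_mul, eval_X_pow, eval_altChooseSumPow, mul_assoc]

theorem alternating_double_sum_eq_zero {N m i e : ℕ} (c : R) (h : i + e < N + m) :
    ∑ a ∈ range (N + 1), (-1) ^ a * N.choose a * (a : R) ^ i *
        ∑ b ∈ range (m + 1), (-1) ^ b * m.choose b * ((a : R) + b + c) ^ e = 0 := by
  rw [alternating_double_sum_eq_coeff c h.le, coeff_X_pow_mul']
  split_ifs
  · rw [coeff_altChooseSumPow_of_lt c (by omega), mul_zero]
  · rw [mul_zero]

theorem alternating_double_sum_eq {N m i e : ℕ} (c : R) (h : i + e = N + m) (hi : i ≤ N) :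
    ∑ a ∈ range (N + 1), (-1) ^ a * N.choose a * (a : R) ^ i *
        ∑ b ∈ range (m + 1), (-1) ^ b * m.choose b * ((a : R) + b + c) ^ e =
      (-1) ^ (N + m) * N.factorial * m.factorial * e.choose (N - i) := by
  obtain rfl : e = m + (N - i) := by omega
  rw [alternating_double_sum_eq_coeff c h.le, coeff_X_pow_mul', if_pos hi,
    coeff_altChooseSumPow_add_self]
  ring

end

theorem V_eq_neg_alternating_double_sum_div (m n i j : ℕ) :
    V m n i j = -(∑ a ∈ range (n + 2), (-1) ^ a * (n + 1).choose a * (a : ℚ) ^ i *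
        ∑ b ∈ range (m + 1), (-1) ^ b * m.choose b * ((a : ℚ) + b + 1) ^ (j - 1)) /
      (n + 1) := by
  calc V m n i j
      = (-1) ^ (m + n + 2) / (n + 1) * ∑ r₁ ∈ range (m + 1), (-1) ^ r₁ * m.choose r₁ *
          ∑ r₂ ∈ range (n + 2), (-1) ^ r₂ * (n + 1).choose r₂ *
            (((n + 1 - r₂ : ℕ) : ℚ) ^ i *
              (((n + 1 - r₂ : ℕ) : ℚ) + (m - r₁ : ℕ) + 1) ^ (j - 1)) := by
        simp only [V, mul_sum]
        refine sum_congr rfl fun r₁ hr₁ => sum_congr rfl fun r₂ hr₂ => ?_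
        have hr₁ := mem_range.mp hr₁
        have hr₂ := mem_range.mp hr₂
        rw [show m + n + 2 - r₁ - r₂ = (n + 1 - r₂) + (m - r₁) + 1 by omega]
        push_cast
        ring
    _ = (-1) ^ (m + n + 2) / (n + 1) * ((-1) ^ m * ∑ b ∈ range (m + 1), (-1) ^ b * m.choose b *
          ((-1) ^ (n + 1) * ∑ a ∈ range (n + 2), (-1) ^ a * (n + 1).choose a *
            ((a : ℚ) ^ i * ((a : ℚ) + b + 1) ^ (j - 1)))) := by
        congr 1
        rw [← sum_alternating_choose_mul_reflect m fun b => (-1) ^ (n + 1) *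
          ∑ a ∈ range (n + 2), (-1) ^ a * (n + 1).choose a *
            ((a : ℚ) ^ i * ((a : ℚ) + b + 1) ^ (j - 1))]
        refine sum_congr rfl fun r₁ _ => ?_
        rw [← sum_alternating_choose_mul_reflect (n + 1)]
    _ = _ := by
        have hsign : (-1 : ℚ) ^ (m + n + 2) * ((-1) ^ m * (-1) ^ (n + 1)) = -1 := by
          rw [← pow_add, ← pow_add, Odd.neg_one_pow ⟨m + n + 1, by ring⟩]
        simp only [mul_sum, sum_div, neg_div, ← sum_neg_distrib]
        rw [sum_comm]
        refine sum_congr rfl fun a _ => sum_congr rfl fun b _ => ?_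
        linear_combination ((-1) ^ a * (n + 1).choose a * (-1) ^ b * m.choose b * (a : ℚ) ^ i *
          ((a : ℚ) + b + 1) ^ (j - 1) / (n + 1)) * hsign

theorem stmt_19_general (m n k : ℕ) (hk : k = m + n + 2) (i j : ℕ)
    (hj : 1 ≤ j) :
    (i + j < k → V m n i j = 0) ∧
    (i + j = k → i ≤ n + 1 →
      V m n i j = (-1 : ℚ) ^ k * (Nat.factorial n) * (Nat.factorial (k - i - 1)) /
        (Nat.factorial (n + 1 - i))) := by
  subst hk
  refine ⟨fun hlt => ?_, fun heq hi => ?_⟩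
  · rw [V_eq_neg_alternating_double_sum_div, alternating_double_sum_eq_zero 1 (by omega),
      neg_zero, zero_div]
  · obtain rfl : j = m + (n + 1 - i) + 1 := by omega
    have hfact : ((m + (n + 1 - i)).factorial : ℚ) =
        (m + (n + 1 - i)).choose (n + 1 - i) * m.factorial * (n + 1 - i).factorial := by
      exact_mod_cast (Nat.add_choose_mul_factorial_mul_factorial m (n + 1 - i)).symm
    rw [V_eq_neg_alternating_double_sum_div,
      alternating_double_sum_eq (N := n + 1) 1 (by omega) hi,
      show m + n + 2 - i - 1 = m + (n + 1 - i) by omega, Nat.add_sub_cancel, hfact,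
      Nat.factorial_succ]
    have hd : ((n + 1 - i).factorial : ℚ) ≠ 0 := by positivity
    push_cast
    field_simp
    ring

theorem stmt_19 (m n k : ℕ) (hk : k = m + n + 2) (i j : ℕ) (hi0 : 0 < i) (hik : i < k)
    (hj : 1 ≤ j) :
    (i + j < k → V m n i j = 0) ∧
    (i + j = k → i ≤ n + 1 →
      V m n i j = (-1 : ℚ) ^ k * (Nat.factorial n) * (Nat.factorial (k - i - 1)) /
        (Nat.factorial (n + 1 - i))) :=
  stmt_19_general m n k hk i j hj
end
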